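/- arXiv:0805.0232 — 6 statements merged into one kernel-verified Lean document; each statement's English description precedes it below -/
import Mathlib

section
/- If a compact metric dynamical system (X,f) is transitive and has a dense set of periodic points, and X is infinite, then (X,f) is sensitive to initial conditions. -/
/-- Transitivity: for all nonempty open `U V`, some `n > 0` has `U ∩ f⁻ⁿ V ≠ ∅`. -/
def IsTransitive {X : Type*} [TopologicalSpace X] (f : X → X) : Prop :=
  ∀ U V : Set X, IsOpen U → IsOpen V → U.Nonempty → V.Nonempty →
    ∃ n : ℕ, 0 < n ∧ (U ∩ f^[n] ⁻¹' V).Nonempty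

/-- Sensitive dependence on initial conditions. -/
def IsSensitive {X : Type*} [MetricSpace X] (f : X → X) : Prop :=
  ∃ η : ℝ, 0 < η ∧ ∀ x : X, ∀ ε : ℝ, 0 < ε →
    ∃ y : X, dist x y < ε ∧ ∃ n : ℕ, η ≤ dist (f^[n] x) (f^[n] y)

lemma iter_mod {X : Type*} (f : X → X) {p : X} {a : ℕ} (hpa : f^[a] p = p) (i : ℕ) :
    f^[i] p = f^[i % a] p := by
  conv_lhs => rw [← Nat.mod_add_div i a]
  rw [Function.iterate_add_apply, Function.iterate_mul, Function.iterate_fixed hpa]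

lemma two_orbits {X : Type*} [MetricSpace X] [Infinite X] (f : X → X)
    (hper : Dense {x : X | ∃ k : ℕ, 0 < k ∧ f^[k] x = x}) :
    ∃ p q : X, ∃ a b : ℕ, 0 < a ∧ 0 < b ∧ f^[a] p = p ∧ f^[b] q = q ∧
      ∀ i j : ℕ, f^[i] p ≠ f^[j] q := by
  obtain ⟨p, a, ha, hpa⟩ := hper.nonempty
  set O : Set X := (fun i => f^[i] p) '' Set.Iio a with hO
  have hOfin : O.Finite := (Set.finite_Iio a).image _
  have hmemO : ∀ i : ℕ, f^[i] p ∈ O := fun i => by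
    refine ⟨i % a, Nat.mod_lt _ ha, (iter_mod f hpa i).symm⟩
  have hopen : IsOpen Oᶜ := hOfin.isClosed.isOpen_compl
  have hne : Oᶜ.Nonempty := (hOfin.infinite_compl).nonempty
  obtain ⟨q, ⟨b, hb, hqb⟩, hqO⟩ := hper.exists_mem_open hopen hne
  refine ⟨p, q, a, b, ha, hb, hpa, hqb, fun i j hij => hqO ?_⟩
  have ht : f^[b * (j / b + 1)] q = q := by
    rw [Function.iterate_mul]; exact Function.iterate_fixed hqb _
  have hj : j ≤ b * (j / b + 1) := by
    have h2 := Nat.div_add_mod j b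
    have h1 : j % b < b := Nat.mod_lt _ hb
    rw [Nat.mul_add, Nat.mul_one]
    linarith
  rw [show b * (j / b + 1) = (b * (j / b + 1) - j) + j by omega,
    Function.iterate_add_apply, ← hij, ← Function.iterate_add_apply] at ht
  rw [← ht]
  exact hmemO _
-- separation: there is δ > 0 with ∀ x, some periodic point r has all orbit points ≥ δ from x
lemma sep_const {X : Type*} [MetricSpace X] (f : X → X) {p q : X} {a b : ℕ}
    (ha : 0 < a) (hb : 0 < b) (hpa : f^[a] p = p) (hqb : f^[b] q = q)
    (hdisj : ∀ i j : ℕ, f^[i] p ≠ f^[j] q) :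
    ∃ δ : ℝ, 0 < δ ∧ ∀ x : X,
      ∃ r : X, ∃ c : ℕ, 0 < c ∧ f^[c] r = r ∧ ∀ i : ℕ, δ ≤ dist x (f^[i] r) := by
  set s : Finset (ℕ × ℕ) := Finset.range a ×ˢ Finset.range b with hs
  have hsne : s.Nonempty := by
    refine ⟨(0, 0), ?_⟩
    simp [hs, Finset.mem_product, ha, hb]
  set δ₀ : ℝ := s.inf' hsne (fun ij => dist (f^[ij.1] p) (f^[ij.2] q)) with hδ₀
  have hδ₀pos : 0 < δ₀ := by
    rw [hδ₀, Finset.lt_inf'_iff]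
    intro ij _
    exact dist_pos.mpr (hdisj ij.1 ij.2)
  have hδ₀le : ∀ i j : ℕ, δ₀ ≤ dist (f^[i] p) (f^[j] q) := by
    intro i j
    rw [iter_mod f hpa i, iter_mod f hqb j]
    have hmem : (i % a, j % b) ∈ s := by
      simp [hs, Finset.mem_product, Nat.mod_lt _ ha, Nat.mod_lt _ hb]
    exact Finset.inf'_le (f := fun ij : ℕ × ℕ => dist (f^[ij.1] p) (f^[ij.2] q)) hmem
  refine ⟨δ₀ / 2, by linarith, fun x => ?_⟩
  by_cases hcase : ∀ i : ℕ, δ₀ / 2 ≤ dist x (f^[i] p)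
  · exact ⟨p, a, ha, hpa, hcase⟩
  · push_neg at hcase
    obtain ⟨i, hi⟩ := hcase
    refine ⟨q, b, hb, hqb, fun j => ?_⟩
    by_contra hj
    push_neg at hj
    have := hδ₀le i j
    have htri := dist_triangle (f^[i] p) x (f^[j] q)
    rw [dist_comm (f^[i] p) x] at htri
    linarith
theorem banks_et_al {X : Type*} [MetricSpace X] [CompactSpace X] [Infinite X]
    (f : X → X) (hf : Continuous f)
    (htrans : IsTransitive f)
    (hper : Dense {x : X | ∃ k : ℕ, 0 < k ∧ f^[k] x = x}) :
    IsSensitive f := by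
  obtain ⟨p, q, a, b, ha, hb, hpa, hqb, hdisj⟩ := two_orbits f hper
  obtain ⟨δ, hδ, hsep⟩ := sep_const f ha hb hpa hqb hdisj
  refine ⟨δ / 4, by linarith, fun x ε hε => ?_⟩
  set ε' := min ε (δ / 4) with hε'
  have hε'pos : 0 < ε' := lt_min hε (by linarith)
  have hε'le : ε' ≤ δ / 4 := min_le_right _ _
  have hε'le' : ε' ≤ ε := min_le_left _ _
  -- a periodic point z close to x
  have hx := hper x
  rw [Metric.mem_closure_iff] at hx
  obtain ⟨z, ⟨m, hm, hzm⟩, hzx⟩ := hx ε' hε'pos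
  -- a periodic orbit far from x
  obtain ⟨r, c, hc, hrc, hr⟩ := hsep x
  -- the open set V
  set V : Set X := ⋂ i ∈ Finset.range (m + 1), f^[i] ⁻¹' Metric.ball (f^[i] r) (δ / 4)
    with hV
  have hVopen : IsOpen V :=
    isOpen_biInter_finset fun i _ => (Metric.isOpen_ball).preimage (hf.iterate i)
  have hVr : r ∈ V := by
    rw [hV, Set.mem_iInter₂]
    intro i _
    exact Metric.mem_ball_self (by linarith)
  obtain ⟨k, hk, y, hyU, hyV⟩ := htrans (Metric.ball x ε') V Metric.isOpen_ball hVopen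
    ⟨x, Metric.mem_ball_self hε'pos⟩ ⟨r, hVr⟩
  set j := m * (k / m + 1) with hj
  have hle : m * (k / m) ≤ k := Nat.mul_div_le k m
  have hjk : k ≤ j := by
    rw [hj, Nat.mul_add, Nat.mul_one, Nat.mul_comm]
    exact (Nat.lt_div_mul_add hm).le
  have hjkm : j - k ≤ m := by
    rw [Nat.sub_le_iff_le_add, hj, Nat.mul_add, Nat.mul_one]
    exact Nat.add_le_add_right hle m |>.trans_eq (Nat.add_comm k m)
  have hzj : f^[j] z = z := by
    rw [hj, Function.iterate_mul]; exact Function.iterate_fixed hzm _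
  have hyj : f^[j] y = f^[j - k] (f^[k] y) := by
    rw [← Function.iterate_add_apply, Nat.sub_add_cancel hjk]
  have hd3 : dist (f^[j] y) (f^[j - k] r) < δ / 4 := by
    rw [hyj]
    have := hyV
    rw [Set.mem_preimage, hV, Set.mem_iInter₂] at this
    have := this (j - k) (Finset.mem_range.mpr (by omega))
    rwa [Set.mem_preimage, Metric.mem_ball] at this
  have hd4 : δ ≤ dist x (f^[j - k] r) := hr (j - k)
  have hd1 : dist x z < ε' := hzx
  have hd2 : dist x y < ε' := by rw [dist_comm]; exact Metric.mem_ball.mp hyU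
  have htri4 : dist x (f^[j - k] r) ≤ dist x z + dist z (f^[j] y) + dist (f^[j] y) (f^[j - k] r) :=
    dist_triangle4 _ _ _ _
  have hfar : δ / 2 ≤ dist (f^[j] z) (f^[j] y) := by
    rw [hzj]; linarith
  have htri : dist (f^[j] z) (f^[j] y) ≤ dist (f^[j] z) (f^[j] x) + dist (f^[j] x) (f^[j] y) :=
    dist_triangle _ _ _
  by_cases hcase : δ / 4 ≤ dist (f^[j] x) (f^[j] z)
  · exact ⟨z, lt_of_lt_of_le hd1 hε'le', j, hcase⟩
  · refine ⟨y, lt_of_lt_of_le hd2 hε'le', j, ?_⟩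
    rw [dist_comm (f^[j] z) (f^[j] x)] at htri
    push_neg at hcase
    linarith
end

section
/- For a continuous self-map of a compact metric space, transitivity of the Cartesian square (X×X, f×f) implies transitivity of every finite Cartesian power (Xᵏ, f×⋯×f) for all k ≥ 1. -/
namespace FurstenbergAux

/-- Return time set. -/
def Nset {X : Type*} (f : X → X) (U V : Set X) : Set ℕ :=
  {n | 0 < n ∧ (U ∩ f^[n] ⁻¹' V).Nonempty}

lemma iter_pair {X : Type*} (f : X → X) (n : ℕ) (p : X × X) :
    (fun p : X × X => (f p.1, f p.2))^[n] p = (f^[n] p.1, f^[n] p.2) := by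
  induction n generalizing p with
  | zero => simp
  | succ n ih => simp [Function.iterate_succ_apply, ih]

lemma iter_pi {X : Type*} {k : ℕ} (f : X → X) (n : ℕ) (x : Fin k → X) :
    (fun x : Fin k → X => fun i => f (x i))^[n] x = fun i => f^[n] (x i) := by
  induction n generalizing x with
  | zero => simp
  | succ n ih => simp [Function.iterate_succ_apply, ih]

lemma iter_comm {X : Type*} (f : X → X) (n m : ℕ) (z : X) :
    f^[n] (f^[m] z) = f^[m] (f^[n] z) := by
  rw [← Function.iterate_add_apply, Nat.add_comm, Function.iterate_add_apply]

variable {X : Type*} [TopologicalSpace X] {f : X → X}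

/-- Weak mixing gives nonemptiness of every `Nset`. -/
lemma nset_nonempty (h2 : IsTransitive (fun p : X × X => (f p.1, f p.2)))
    {U V : Set X} (hU : IsOpen U) (hV : IsOpen V) (hUne : U.Nonempty) (hVne : V.Nonempty) :
    ∃ n, n ∈ Nset f U V := by
  obtain ⟨n, hn, ⟨p, hp1, hp2⟩⟩ := h2 (U ×ˢ U) (V ×ˢ V) (hU.prod hU) (hV.prod hV)
    (hUne.prod hUne) (hVne.prod hVne)
  refine ⟨n, hn, p.1, hp1.1, ?_⟩
  have := Set.mem_preimage.mp hp2
  rw [iter_pair] at this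
  exact this.1

/-- Furstenberg's key lemma: intersecting two return time sets. -/
lemma key (hf : Continuous f) (h2 : IsTransitive (fun p : X × X => (f p.1, f p.2)))
    {U₁ V₁ U₂ V₂ : Set X} (hU₁ : IsOpen U₁) (hV₁ : IsOpen V₁) (hU₂ : IsOpen U₂)
    (hV₂ : IsOpen V₂) (hU₁n : U₁.Nonempty) (hV₁n : V₁.Nonempty) (hU₂n : U₂.Nonempty)
    (hV₂n : V₂.Nonempty) :
    ∃ U V : Set X, IsOpen U ∧ IsOpen V ∧ U.Nonempty ∧ V.Nonempty ∧
      ∀ n ∈ Nset f U V, n ∈ Nset f U₁ V₁ ∧ n ∈ Nset f U₂ V₂ := by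
  obtain ⟨m, hm, ⟨p, hp1, hp2⟩⟩ := h2 (U₁ ×ˢ V₁) (U₂ ×ˢ V₂) (hU₁.prod hV₁) (hU₂.prod hV₂)
    (hU₁n.prod hV₁n) (hU₂n.prod hV₂n)
  have hp2' := Set.mem_preimage.mp hp2
  rw [iter_pair] at hp2'
  refine ⟨U₁ ∩ f^[m] ⁻¹' U₂, V₁ ∩ f^[m] ⁻¹' V₂,
    hU₁.inter (hU₂.preimage (hf.iterate m)), hV₁.inter (hV₂.preimage (hf.iterate m)),
    ⟨p.1, hp1.1, hp2'.1⟩, ⟨p.2, hp1.2, hp2'.2⟩, ?_⟩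
  rintro n ⟨hn, z, ⟨hz1, hz2⟩, hz3⟩
  have hz3' : f^[n] z ∈ V₁ ∩ f^[m] ⁻¹' V₂ := hz3
  refine ⟨⟨hn, z, hz1, hz3'.1⟩, hn, f^[m] z, hz2, ?_⟩
  show f^[n] (f^[m] z) ∈ V₂
  rw [iter_comm]
  exact hz3'.2

/-- Intersecting finitely many return time sets. -/
lemma key_many (hf : Continuous f) (h2 : IsTransitive (fun p : X × X => (f p.1, f p.2)))
    (k : ℕ) (hk : 1 ≤ k) (U V : Fin k → Set X) (hU : ∀ i, IsOpen (U i))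
    (hV : ∀ i, IsOpen (V i)) (hUn : ∀ i, (U i).Nonempty) (hVn : ∀ i, (V i).Nonempty) :
    ∃ U' V' : Set X, IsOpen U' ∧ IsOpen V' ∧ U'.Nonempty ∧ V'.Nonempty ∧
      ∀ n ∈ Nset f U' V', ∀ i, n ∈ Nset f (U i) (V i) := by
  induction k with
  | zero => omega
  | succ k ih =>
    rcases Nat.eq_or_lt_of_le hk with h1 | h1
    · -- k + 1 = 1, i.e. k = 0
      have hk0 : k = 0 := by omega
      subst hk0
      exact ⟨U 0, V 0, hU 0, hV 0, hUn 0, hVn 0, fun n hn i => by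
        have : i = 0 := Fin.ext (by omega)
        rwa [this]⟩
    · have hk1 : 1 ≤ k := by omega
      obtain ⟨U', V', hU', hV', hU'n, hV'n, hmem⟩ :=
        ih hk1 (fun i => U i.castSucc) (fun i => V i.castSucc)
          (fun i => hU _) (fun i => hV _) (fun i => hUn _) (fun i => hVn _)
      obtain ⟨U'', V'', hU'', hV'', hU''n, hV''n, hmem2⟩ :=
        key hf h2 hU' hV' (hU (Fin.last k)) (hV (Fin.last k)) hU'n hV'n
          (hUn (Fin.last k)) (hVn (Fin.last k))
      refine ⟨U'', V'', hU'', hV'', hU''n, hV''n, fun n hn i => ?_⟩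
      obtain ⟨h1', h2'⟩ := hmem2 n hn
      induction i using Fin.lastCases with
      | last => exact h2'
      | cast j => exact hmem n h1' j

end FurstenbergAux

open FurstenbergAux in
theorem furstenberg_weak_mixing_powers {X : Type*} [MetricSpace X] [CompactSpace X]
    (f : X → X) (hf : Continuous f)
    (h2 : IsTransitive (fun p : X × X => (f p.1, f p.2))) :
    ∀ k : ℕ, 1 ≤ k → IsTransitive (fun x : Fin k → X => fun i => f (x i)) := by
  intro k hk W₁ W₂ hW₁ hW₂ ⟨x, hx⟩ ⟨y, hy⟩
  -- find boxes inside W₁ and W₂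
  obtain ⟨I, u, hu, huW⟩ := (isOpen_pi_iff.mp hW₁) x hx
  obtain ⟨J, v, hv, hvW⟩ := (isOpen_pi_iff.mp hW₂) y hy
  set U : Fin k → Set X := fun i => if i ∈ I then u i else Set.univ with hUdef
  set V : Fin k → Set X := fun i => if i ∈ J then v i else Set.univ with hVdef
  have hUo : ∀ i, IsOpen (U i) := fun i => by
    by_cases h : i ∈ I <;> simp [hUdef, h, (hu i · |>.1)]
  have hVo : ∀ i, IsOpen (V i) := fun i => by
    by_cases h : i ∈ J <;> simp [hVdef, h, (hv i · |>.1)]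
  have hUn : ∀ i, (U i).Nonempty := fun i => by
    by_cases h : i ∈ I
    · exact ⟨x i, by simp [hUdef, h, (hu i h).2]⟩
    · exact ⟨x i, by simp [hUdef, h]⟩
  have hVn : ∀ i, (V i).Nonempty := fun i => by
    by_cases h : i ∈ J
    · exact ⟨y i, by simp [hVdef, h, (hv i h).2]⟩
    · exact ⟨y i, by simp [hVdef, h]⟩
  obtain ⟨U', V', hU', hV', hU'n, hV'n, hmem⟩ := key_many hf h2 k hk U V hUo hVo hUn hVn
  obtain ⟨n, hn⟩ := nset_nonempty h2 hU' hV' hU'n hV'n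
  have hall : ∀ i, n ∈ Nset f (U i) (V i) := hmem n hn
  have hpos : 0 < n := hn.1
  choose z hz1 hz2 using fun i => (hall i).2
  refine ⟨n, hpos, z, ?_, ?_⟩
  · apply huW
    intro i hi
    have := hz1 i
    simpa [hUdef, Finset.mem_coe.mp hi] using this
  · rw [Set.mem_preimage, iter_pi]
    apply hvW
    intro i hi
    have := hz2 i
    simpa [hVdef, Finset.mem_coe.mp hi] using this
end

section
/- A weakly mixing compact dynamical system with more than one point is sensitive to initial conditions. -/
/-- Weak mixing: the product system is transitive. -/
def IsWeaklyMixing {X : Type*} [TopologicalSpace X] (f : X → X) : Prop :=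
  ∀ U₁ U₂ V₁ V₂ : Set X, IsOpen U₁ → IsOpen U₂ → IsOpen V₁ → IsOpen V₂ →
    U₁.Nonempty → U₂.Nonempty → V₁.Nonempty → V₂.Nonempty →
    ∃ n : ℕ, 0 < n ∧ (U₁ ∩ f^[n] ⁻¹' V₁).Nonempty ∧ (U₂ ∩ f^[n] ⁻¹' V₂).Nonempty

theorem weak_mixing_implies_sensitive {X : Type*} [MetricSpace X] [CompactSpace X]
    [Nontrivial X] (f : X → X) (hf : Continuous f) (hwm : IsWeaklyMixing f) :
    IsSensitive f := by
  obtain ⟨a, b, hab⟩ := exists_pair_ne X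
  have hδ : 0 < dist a b := dist_pos.mpr hab
  refine ⟨dist a b / 4, by linarith, fun x ε hε => ?_⟩
  obtain ⟨n, -, ⟨y₁, hy₁U, hy₁V⟩, ⟨y₂, hy₂U, hy₂V⟩⟩ :=
    hwm (Metric.ball x ε) (Metric.ball x ε) (Metric.ball a (dist a b / 4))
      (Metric.ball b (dist a b / 4)) Metric.isOpen_ball Metric.isOpen_ball
      Metric.isOpen_ball Metric.isOpen_ball ⟨x, Metric.mem_ball_self hε⟩
      ⟨x, Metric.mem_ball_self hε⟩ ⟨a, Metric.mem_ball_self (by linarith)⟩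
      ⟨b, Metric.mem_ball_self (by linarith)⟩
  simp only [Set.mem_preimage, Metric.mem_ball] at hy₁U hy₁V hy₂U hy₂V
  have h12 : dist a b / 2 ≤ dist (f^[n] y₁) (f^[n] y₂) := by
    have := dist_triangle4 a (f^[n] y₁) (f^[n] y₂) b
    have h1 : dist a (f^[n] y₁) < dist a b / 4 := by rw [dist_comm]; exact hy₁V
    linarith
  have htri := dist_triangle (f^[n] y₁) (f^[n] x) (f^[n] y₂)
  rcases le_or_gt (dist a b / 4) (dist (f^[n] x) (f^[n] y₁)) with h | h
  · exact ⟨y₁, by rw [dist_comm]; exact hy₁U, n, h⟩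
  · refine ⟨y₂, by rw [dist_comm]; exact hy₂U, n, ?_⟩
    rw [dist_comm (f^[n] y₁) (f^[n] x)] at htri
    linarith
end

section
/- If (X,f) is transitive but not sensitive (X compact metric), then (X,f) has an equicontinuity point. -/
/-- `x` is an equicontinuity point of `(X, f)`. -/
def EquicontinuityPoint {X : Type*} [MetricSpace X] (f : X → X) (x : X) : Prop :=
  ∀ ε : ℝ, 0 < ε → ∃ η : ℝ, 0 < η ∧ ∀ y : X, dist x y ≤ η →
    ∀ n : ℕ, dist (f^[n] x) (f^[n] y) ≤ ε

/-- The set of `ε`-stable points: points having a ball around them any two of whose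
points stay `ε`-close under all iterates. -/
def stableSet {X : Type*} [MetricSpace X] (f : X → X) (ε : ℝ) : Set X :=
  {x | ∃ δ > (0:ℝ), ∀ y ∈ Metric.ball x δ, ∀ y' ∈ Metric.ball x δ,
    ∀ n : ℕ, dist (f^[n] y) (f^[n] y') ≤ ε}

lemma stableSet_isOpen {X : Type*} [MetricSpace X] (f : X → X) (ε : ℝ) :
    IsOpen (stableSet f ε) := by
  rw [Metric.isOpen_iff]
  rintro x ⟨δ, hδ, hx⟩
  refine ⟨δ/2, by linarith, fun z hz => ⟨δ/2, by linarith, fun y hy y' hy' n => ?_⟩⟩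
  have hsub : Metric.ball z (δ/2) ⊆ Metric.ball x δ := by
    apply Metric.ball_subset_ball'
    have := Metric.mem_ball.mp hz
    linarith
  exact hx y (hsub hy) y' (hsub hy') n

/-- Finitely many iterates are simultaneously continuous at a point. -/
lemma iterates_cont {X : Type*} [MetricSpace X] {f : X → X} (hf : Continuous f)
    (z : X) (n : ℕ) {ε : ℝ} (hε : 0 < ε) :
    ∃ ρ > (0:ℝ), ∀ y, dist z y < ρ → ∀ m ≤ n, dist (f^[m] z) (f^[m] y) < ε := by
  induction n with
  | zero =>
    exact ⟨ε, hε, fun y hy m hm => by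
      interval_cases m; simpa using hy⟩
  | succ n ih =>
    obtain ⟨ρ, hρ, hρ'⟩ := ih
    have hc : ContinuousAt (f^[n+1]) z := (hf.iterate (n+1)).continuousAt
    rw [Metric.continuousAt_iff] at hc
    obtain ⟨ρ₂, hρ₂, hρ₂'⟩ := hc ε hε
    refine ⟨min ρ ρ₂, lt_min hρ hρ₂, fun y hy m hm => ?_⟩
    rcases Nat.lt_succ_iff_lt_or_eq.mp (Nat.lt_succ_of_le hm) with h | h
    · exact hρ' y (lt_of_lt_of_le hy (min_le_left _ _)) m (Nat.lt_succ_iff.mp h)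
    · subst h
      have := hρ₂' (show dist y z < ρ₂ by
        rw [dist_comm]; exact lt_of_lt_of_le hy (min_le_right _ _))
      rw [dist_comm] at this
      exact this

lemma stableSet_dense {X : Type*} [MetricSpace X] {f : X → X} (hf : Continuous f)
    (htrans : IsTransitive f) {ε : ℝ} (hε : 0 < ε)
    (x₀ : X) (δ₀ : ℝ) (hδ₀ : 0 < δ₀)
    (hx₀ : ∀ y, dist x₀ y < δ₀ → ∀ n : ℕ, dist (f^[n] x₀) (f^[n] y) < ε/4) :
    Dense (stableSet f ε) := by
  rw [dense_iff_inter_open]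
  intro U hU hUne
  -- x₀ is in stableSet with parameter ε/2
  have hx₀' : ∀ y ∈ Metric.ball x₀ δ₀, ∀ y' ∈ Metric.ball x₀ δ₀, ∀ n : ℕ,
      dist (f^[n] y) (f^[n] y') ≤ ε/2 := by
    intro y hy y' hy' n
    have h1 := hx₀ y (Metric.mem_ball'.mp hy) n
    have h2 := hx₀ y' (Metric.mem_ball'.mp hy') n
    calc dist (f^[n] y) (f^[n] y') ≤ dist (f^[n] y) (f^[n] x₀) + dist (f^[n] x₀) (f^[n] y') :=
      dist_triangle _ _ _
    _ ≤ ε/2 := by rw [dist_comm (f^[n] y)] ; linarith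
  obtain ⟨n, hn, z, hzU, hzV⟩ := htrans U (Metric.ball x₀ δ₀) hU Metric.isOpen_ball hUne
    ⟨x₀, Metric.mem_ball_self hδ₀⟩
  -- z ∈ U, f^[n] z ∈ ball x₀ δ₀
  have hzV : f^[n] z ∈ Metric.ball x₀ δ₀ := hzV
  -- choose ρ small
  obtain ⟨ρ₁, hρ₁, hρ₁'⟩ := iterates_cont hf z n (show (0:ℝ) < ε/2 by linarith)
  have hball : IsOpen ((f^[n]) ⁻¹' Metric.ball x₀ δ₀) :=
    Metric.isOpen_ball.preimage (hf.iterate n)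
  rw [Metric.isOpen_iff] at hball
  obtain ⟨ρ₂, hρ₂, hρ₂'⟩ := hball z hzV
  refine ⟨z, hzU, min ρ₁ ρ₂ / 2, by positivity, fun y hy y' hy' m => ?_⟩
  have hmin : (0:ℝ) < min ρ₁ ρ₂ := lt_min hρ₁ hρ₂
  have hminl := min_le_left ρ₁ ρ₂
  have hminr := min_le_right ρ₁ ρ₂
  have hy0 := Metric.mem_ball'.mp hy
  have hy0' := Metric.mem_ball'.mp hy'
  have hy1 : dist z y < ρ₁ := by linarith
  have hy1' : dist z y' < ρ₁ := by linarith
  have hy2 : y ∈ Metric.ball z ρ₂ := Metric.mem_ball'.mpr (by linarith)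
  have hy2' : y' ∈ Metric.ball z ρ₂ := Metric.mem_ball'.mpr (by linarith)
  rcases le_or_gt m n with hm | hm
  · have h1 := hρ₁' y hy1 m hm
    have h2 := hρ₁' y' hy1' m hm
    calc dist (f^[m] y) (f^[m] y') ≤ dist (f^[m] y) (f^[m] z) + dist (f^[m] z) (f^[m] y') :=
      dist_triangle _ _ _
    _ ≤ ε := by rw [dist_comm (f^[m] y)]; linarith
  · obtain ⟨k, rfl⟩ : ∃ k, m = k + n := ⟨m - n, (Nat.sub_add_cancel hm.le).symm⟩
    rw [Function.iterate_add_apply, Function.iterate_add_apply]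
    have := hx₀' (f^[n] y) (hρ₂' hy2) (f^[n] y') (hρ₂' hy2') k
    linarith

theorem transitive_not_sensitive_has_equicontinuity_point {X : Type*} [MetricSpace X]
    [CompactSpace X] (f : X → X) (hf : Continuous f)
    (htrans : IsTransitive f) (hns : ¬ IsSensitive f) :
    ∃ x : X, EquicontinuityPoint f x := by
  -- X is nonempty, else f would be (vacuously) sensitive
  have hX : Nonempty X := by
    by_contra h
    rw [not_nonempty_iff] at h
    exact hns ⟨1, one_pos, fun x => (IsEmpty.false x).elim⟩
  -- unfold non-sensitivity
  rw [IsSensitive] at hns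
  push_neg at hns
  -- each stableSet f ε (ε > 0) is dense
  have hdense : ∀ ε : ℝ, 0 < ε → Dense (stableSet f ε) := by
    intro ε hε
    obtain ⟨x₀, δ₀, hδ₀, hx₀⟩ := hns (ε/4) (by linarith)
    exact stableSet_dense hf htrans hε x₀ δ₀ hδ₀ (fun y hy n => hx₀ y hy n)
  -- Baire category
  have hD : Dense (⋂ k : ℕ, stableSet f (1/(k+1))) :=
    dense_iInter_of_isOpen (fun k => stableSet_isOpen f _)
      (fun k => hdense _ (by positivity))
  obtain ⟨x, hx⟩ := hD.nonempty
  refine ⟨x, fun ε hε => ?_⟩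
  obtain ⟨k, hk⟩ := exists_nat_one_div_lt hε
  have hxk : x ∈ stableSet f (1/(k+1)) := Set.mem_iInter.mp hx k
  obtain ⟨δ, hδ, hst⟩ := hxk
  refine ⟨δ/2, by linarith, fun y hy n => ?_⟩
  have h1 : x ∈ Metric.ball x δ := Metric.mem_ball_self hδ
  have h2 : y ∈ Metric.ball x δ := Metric.mem_ball.mpr (by rw [dist_comm]; linarith)
  have := hst x h1 y h2 n
  have hk' : (1:ℝ)/(k+1) ≤ ε := le_of_lt (by exact_mod_cast hk)
  linarith
end

section
/- For a cellular automaton F on A^ℤ (A finite, product topology): if F is transitive, then F is sensitive. -/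
/-- The standard Cantor metric on `A^ℤ`: `d(x,y) = 2^{-min{|i| : xᵢ ≠ yᵢ}}`. -/
noncomputable def cantorDist {A : Type*} [DecidableEq A] (x y : ℤ → A) : ℝ :=
  open Classical in
  if x = y then 0
  else (1 / 2 : ℝ) ^ (sInf {n : ℕ | ∃ i : ℤ, i.natAbs = n ∧ x i ≠ y i})

/-- The shift map on `A^ℤ`. -/
def shiftMap {A : Type*} (x : ℤ → A) : ℤ → A := fun i => x (i + 1)

/-- Sensitivity with respect to the Cantor metric. -/
def IsSensitiveCA {A : Type*} [DecidableEq A] (F : (ℤ → A) → (ℤ → A)) : Prop :=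
  ∃ η : ℝ, 0 < η ∧ ∀ x : ℤ → A, ∀ ε : ℝ, 0 < ε →
    ∃ y : ℤ → A, cantorDist x y < ε ∧ ∃ n : ℕ, η ≤ cantorDist (F^[n] x) (F^[n] y)

lemma shiftMap_iterate {A : Type*} (k : ℕ) (y : ℤ → A) (i : ℤ) :
    (shiftMap^[k] y) i = y (i + k) := by
  induction k generalizing i with
  | zero => simp
  | succ k ih =>
    simp only [Function.iterate_succ_apply', shiftMap]
    rw [ih]
    congr 1
    push_cast
    ring

lemma cantorDist_le_of_agree {A : Type*} [DecidableEq A] {x y : ℤ → A} {m : ℕ}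
    (h : ∀ i : ℤ, i.natAbs ≤ m → x i = y i) : cantorDist x y ≤ (1 / 2 : ℝ) ^ m := by
  unfold cantorDist
  split
  · positivity
  · rename_i hne
    have hS : {n : ℕ | ∃ i : ℤ, i.natAbs = n ∧ x i ≠ y i}.Nonempty := by
      obtain ⟨i, hi⟩ := Function.ne_iff.mp hne
      exact ⟨i.natAbs, i, rfl, hi⟩
    obtain ⟨i, hi, hix⟩ := Nat.sInf_mem hS
    have : m ≤ sInf {n : ℕ | ∃ i : ℤ, i.natAbs = n ∧ x i ≠ y i} := by
      rw [← hi]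
      by_contra hlt
      exact hix (h i (by omega))
    exact pow_le_pow_of_le_one (by norm_num) (by norm_num) this

lemma eq_at_zero_of_cantorDist_lt_one {A : Type*} [DecidableEq A] {x y : ℤ → A}
    (h : cantorDist x y < 1) : x 0 = y 0 := by
  by_contra hne
  have hxy : x ≠ y := fun he => hne (congrFun he 0)
  unfold cantorDist at h
  rw [if_neg hxy] at h
  have h0 : (0 : ℕ) ∈ {n : ℕ | ∃ i : ℤ, i.natAbs = n ∧ x i ≠ y i} := ⟨0, rfl, hne⟩
  have : sInf {n : ℕ | ∃ i : ℤ, i.natAbs = n ∧ x i ≠ y i} = 0 :=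
    Nat.eq_zero_of_le_zero (Nat.sInf_le h0)
  rw [this] at h
  norm_num at h

theorem transitive_CA_is_sensitive {A : Type*} [Fintype A] [DecidableEq A]
    [Nontrivial A] [TopologicalSpace A] [DiscreteTopology A]
    (F : (ℤ → A) → (ℤ → A)) (hcont : Continuous F)
    (hcomm : F ∘ shiftMap = shiftMap ∘ F)
    (htrans : IsTransitive F) : IsSensitiveCA F := by
  have hFC : Function.Commute F (shiftMap (A := A)) := fun y => congrFun hcomm y
  refine ⟨1, one_pos, fun x ε hε => ?_⟩
  by_contra hno
  push_neg at hno
  -- hno : ∀ y, cantorDist x y < ε → ∀ n, cantorDist (F^[n] x) (F^[n] y) < 1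
  obtain ⟨m, hm⟩ := exists_pow_lt_of_lt_one hε (by norm_num : (1 / 2 : ℝ) < 1)
  -- Key blocking property
  have key : ∀ (k : ℕ) (y : ℤ → A), (∀ i : ℤ, i.natAbs ≤ m → y (i + k) = x i) →
      ∀ n : ℕ, (F^[n] y) k = (F^[n] x) 0 := by
    intro k y hagree n
    set z := shiftMap^[k] y with hz
    have hzx : ∀ i : ℤ, i.natAbs ≤ m → x i = z i := by
      intro i hi
      rw [hz, shiftMap_iterate]
      exact (hagree i hi).symm
    have hdist : cantorDist x z < ε :=
      lt_of_le_of_lt (cantorDist_le_of_agree hzx) hm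
    have h1 : (F^[n] x) 0 = (F^[n] z) 0 :=
      eq_at_zero_of_cantorDist_lt_one (hno z hdist n)
    have h2 : F^[n] z = shiftMap^[k] (F^[n] y) := by
      rw [hz]
      exact ((hFC.iterate_left n).iterate_right k) y
    rw [h2, shiftMap_iterate, zero_add] at h1
    exact h1.symm
  -- set up the two open sets
  set K : ℤ := 2 * m + 1 with hK
  set U : Set (ℤ → A) :=
    ⋂ i ∈ Finset.Icc (-(m : ℤ)) m, ({y | y i = x i} ∩ {y | y (i + K) = x i}) with hU
  set V : Set (ℤ → A) := {z | z 0 ≠ z K} with hV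
  have hUopen : IsOpen U := by
    refine isOpen_biInter_finset fun i _ => IsOpen.inter ?_ ?_
    · have hc : Continuous (fun y : ℤ → A => y i) := continuous_apply i
      exact hc.isOpen_preimage {a | a = x i} (isOpen_discrete _)
    · have hc : Continuous (fun y : ℤ → A => y (i + K)) := continuous_apply (i + K)
      exact hc.isOpen_preimage {a | a = x i} (isOpen_discrete _)
  have hVopen : IsOpen V := by
    have : V = (fun z : ℤ → A => (z 0, z K)) ⁻¹' {p : A × A | p.1 ≠ p.2} := rfl
    rw [this]
    exact ((continuous_apply (0 : ℤ)).prodMk (continuous_apply K)).isOpen_preimage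
      _ (isOpen_discrete _)
  have hUne : U.Nonempty := by
    refine ⟨fun i => if i ≤ (m : ℤ) then x i else x (i - K), ?_⟩
    simp only [hU, Set.mem_iInter, Set.mem_inter_iff, Set.mem_setOf_eq]
    intro i hi
    simp only [Finset.mem_Icc] at hi
    constructor
    · rw [if_pos hi.2]
    · rw [if_neg (by omega), hK]; ring_nf
  have hVne : V.Nonempty := by
    obtain ⟨a, b, hab⟩ := exists_pair_ne A
    have hK0 : K ≠ 0 := by rw [hK]; omega
    refine ⟨fun i => if i = 0 then a else b, ?_⟩
    show (if (0:ℤ) = 0 then a else b) ≠ (if K = 0 then a else b)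
    rw [if_pos rfl, if_neg hK0]
    exact hab
  obtain ⟨n, hn, y, hyU, hyV⟩ := htrans U V hUopen hVopen hUne hVne
  simp only [hU, Set.mem_iInter, Set.mem_inter_iff, Set.mem_setOf_eq] at hyU
  have hy0 : (F^[n] y) ((0 : ℕ) : ℤ) = (F^[n] x) 0 := by
    apply key
    intro i hi
    have := (hyU i (by simp [Finset.mem_Icc]; omega)).1
    simpa using this
  have hyK : (F^[n] y) ((2 * m + 1 : ℕ) : ℤ) = (F^[n] x) 0 := by
    apply key
    intro i hi
    have := (hyU i (by simp [Finset.mem_Icc]; omega)).2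
    rw [← this]
    congr 1
    all_goals (push_cast [hK]; ring)
  have hy0' : (F^[n] y) 0 = (F^[n] x) 0 := by simpa using hy0
  have hyK' : (F^[n] y) K = (F^[n] x) 0 := by
    rw [show K = ((2 * m + 1 : ℕ) : ℤ) by rw [hK]; push_cast; ring]
    exact hyK
  exact hyV (hy0'.trans hyK'.symm)
end

section
/- Almost distality is preserved under factor maps: if (X,f) has no scrambled pairs and φ : (X,f) → (Y,g) is a factor map between compact systems, then (Y,g) has no scrambled pairs. Equivalently, any extension of a system having a scrambled pair itself has a scrambled pair. -/
open Filter

/-- A scrambled pair. -/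
def ScrambledPair {X : Type*} [MetricSpace X] (f : X → X) (x y : X) : Prop :=
  x ≠ y ∧ liminf (fun n : ℕ => dist (f^[n] x) (f^[n] y)) atTop = 0 ∧
    0 < limsup (fun n : ℕ => dist (f^[n] x) (f^[n] y)) atTop

private lemma phi_iterate_aux {X Y : Type*} (f : X → X) (g : Y → Y) (φ : X → Y)
    (hcomm : φ ∘ f = g ∘ φ) : ∀ (n : ℕ) (a : X), φ (f^[n] a) = g^[n] (φ a) := by
  intro n
  induction n with
  | zero => intro a; simp
  | succ n ih =>
    intro a
    rw [Function.iterate_succ_apply, Function.iterate_succ_apply, ih (f a)]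
    have : φ (f a) = g (φ a) := congrFun hcomm a
    rw [this]

theorem almost_distal_preserved_by_factors {X Y : Type*}
    [MetricSpace X] [CompactSpace X] [MetricSpace Y] [CompactSpace Y]
    (f : X → X) (g : Y → Y) (hf : Continuous f) (hg : Continuous g)
    (φ : X → Y) (hφc : Continuous φ) (hφs : Function.Surjective φ)
    (hcomm : φ ∘ f = g ∘ φ)
    (hX : ∀ x x' : X, ¬ ScrambledPair f x x') :
    ∀ y y' : Y, ¬ ScrambledPair g y y' := by
  intro y y' hsc
  obtain ⟨hne, hli, hls⟩ := hsc
  obtain ⟨x, rfl⟩ := hφs y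
  obtain ⟨x', rfl⟩ := hφs y'
  have hit : ∀ (n : ℕ) (a : X), φ (f^[n] a) = g^[n] (φ a) := phi_iterate_aux f g φ hcomm
  -- distances in X are bounded
  obtain ⟨C, hC⟩ : ∃ C, ∀ a b : X, dist a b ≤ C := by
    obtain ⟨C, hC⟩ := Metric.isBounded_iff.mp (isCompact_univ (X := X)).isBounded
    exact ⟨C, fun a b => hC trivial trivial⟩
  obtain ⟨D, hD⟩ : ∃ D, ∀ a b : Y, dist a b ≤ D := by
    obtain ⟨D, hD⟩ := Metric.isBounded_iff.mp (isCompact_univ (X := Y)).isBounded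
    exact ⟨D, fun a b => hD trivial trivial⟩
  -- semigroup structure on X → X by composition
  letI : Mul (X → X) := ⟨fun p q => p ∘ q⟩
  letI : Semigroup (X → X) := { mul_assoc := fun _ _ _ => rfl }
  have hmulc : ∀ r : X → X, Continuous (· * r) := fun r =>
    continuous_pi fun a => continuous_apply (r a)
  -- tails of the iterates
  set R : ℕ → Set (X → X) := fun m => {q | ∃ n, m ≤ n ∧ q = f^[n]} with hRdef
  have hLn : ∀ (n m : ℕ), ∀ q ∈ closure (R m), f^[n] ∘ q ∈ closure (R m) := by
    intro n m q hq
    have hcont : Continuous (fun r : X → X => f^[n] ∘ r) :=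
      continuous_pi fun a => (hf.iterate n).comp (continuous_apply a)
    have himg : (fun r : X → X => f^[n] ∘ r) '' R m ⊆ R m := by
      rintro _ ⟨r, ⟨j, hj, rfl⟩, rfl⟩
      exact ⟨n + j, le_trans hj (Nat.le_add_left _ _), (Function.iterate_add f n j).symm⟩
    have h1 : f^[n] ∘ q ∈ closure ((fun r : X → X => f^[n] ∘ r) '' R m) :=
      image_closure_subset_closure_image hcont ⟨q, hq, rfl⟩
    exact closure_mono himg h1
  have hcomp : ∀ (m : ℕ), ∀ p ∈ closure (R 0), ∀ q ∈ closure (R m),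
      p ∘ q ∈ closure (R m) := by
    intro m p hp q hq
    have hcont : Continuous (fun r : X → X => r ∘ q) := hmulc q
    have himg : (fun r : X → X => r ∘ q) '' R 0 ⊆ closure (R m) := by
      rintro _ ⟨r, ⟨j, _, rfl⟩, rfl⟩
      exact hLn j m q hq
    have h1 : p ∘ q ∈ closure ((fun r : X → X => r ∘ q) '' R 0) :=
      image_closure_subset_closure_image hcont ⟨p, hp, rfl⟩
    have h2 := closure_mono himg h1
    rwa [closure_closure] at h2
  have hker : ∀ u v : X, φ u = φ v → ∀ p ∈ closure (R 0), φ (p u) = φ (p v) := by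
    intro u v huv p hp
    have hcl : IsClosed {q : X → X | φ (q u) = φ (q v)} :=
      isClosed_eq (hφc.comp (continuous_apply u)) (hφc.comp (continuous_apply v))
    have hsub : R 0 ⊆ {q : X → X | φ (q u) = φ (q v)} := by
      rintro _ ⟨n, _, rfl⟩
      simp only [Set.mem_setOf_eq, hit, huv]
    exact closure_minimal hsub hcl hp
  -- the key compact subsemigroup
  set T : Set (X → X) := {p | (∀ m, p ∈ closure (R m)) ∧ φ (p x) = φ (p x')} with hTdef
  -- T is nonempty
  have hTne : T.Nonempty := by
    have hfreq : ∀ k : ℕ, ∃ᶠ n in atTop,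
        dist (g^[n] (φ x)) (g^[n] (φ x')) < 1 / (k + 1 : ℝ) := by
      intro k
      have hb : IsBoundedUnder (· ≤ ·) atTop
          (fun n : ℕ => dist (g^[n] (φ x)) (g^[n] (φ x'))) :=
        isBoundedUnder_of ⟨D, fun n => hD _ _⟩
      exact frequently_lt_of_liminf_lt hb.isCoboundedUnder_ge (by rw [hli]; positivity)
    obtain ⟨e, hemono, he⟩ := Filter.extraction_forall_of_frequently hfreq
    set u : ℕ → (X → X) := fun k => f^[e k] with hu
    obtain ⟨p, -, hp⟩ := isCompact_univ.exists_clusterPt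
      (f := Filter.map u atTop) (le_principal_iff.mpr (univ_mem))
    have hptail : ∀ m, p ∈ closure (R m) := by
      intro m
      rw [mem_closure_iff_clusterPt]
      refine hp.mono (le_principal_iff.mpr ?_)
      rw [mem_map]
      filter_upwards [eventually_ge_atTop m] with k hk
      exact ⟨e k, le_trans hk (hemono.le_apply), rfl⟩
    have hpeq : φ (p x) = φ (p x') := by
      set Φ : (X → X) → ℝ := fun q => dist (φ (q x)) (φ (q x')) with hΦ
      have hΦc : Continuous Φ :=
        Continuous.dist (hφc.comp (continuous_apply x)) (hφc.comp (continuous_apply x'))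
      have hΦu : Tendsto (Φ ∘ u) atTop (nhds 0) := by
        have h0 : Tendsto (fun k : ℕ => (0 : ℝ)) atTop (nhds 0) := tendsto_const_nhds
        refine tendsto_of_tendsto_of_tendsto_of_le_of_le h0
          tendsto_one_div_add_atTop_nhds_zero_nat
          (fun k => dist_nonneg) (fun k => ?_)
        have := he k
        simp only [Function.comp_apply, hΦ, hu, hit]
        exact le_of_lt (he k)
      have hclΦ : ClusterPt (Φ p) (Filter.map (Φ ∘ u) atTop) := by
        have := hp.map hΦc.continuousAt (tendsto_map (f := Φ))
        rwa [Filter.map_map] at this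
      have : Φ p = 0 := by
        have hle : Filter.map (Φ ∘ u) atTop ≤ nhds 0 := hΦu
        exact eq_of_nhds_neBot (hclΦ.mono hle)
      exact dist_eq_zero.mp this
    exact ⟨p, hptail, hpeq⟩
  -- T is a compact subsemigroup
  have hTclosed : IsClosed T := by
    rw [hTdef, Set.setOf_and]
    apply IsClosed.inter
    · rw [Set.setOf_forall]
      exact isClosed_iInter fun m => isClosed_closure
    · exact isClosed_eq (hφc.comp (continuous_apply x)) (hφc.comp (continuous_apply x'))
  have hTmul : ∀ p ∈ T, ∀ q ∈ T, p * q ∈ T := by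
    rintro p ⟨hp1, hp2⟩ q ⟨hq1, hq2⟩
    refine ⟨fun m => hcomp m p (hp1 0) q (hq1 m), ?_⟩
    exact hker (q x) (q x') hq2 p (hp1 0)
  obtain ⟨w, hwT, hww⟩ := exists_idempotent_in_compact_subsemigroup hmulc T hTne
    hTclosed.isCompact (fun p hp q hq => hTmul p hp q hq)
  obtain ⟨hwtail, hwφ⟩ := hwT
  -- the pair (z, w z) is proximal, hence asymptotic, for every z
  have hprox : ∀ z : X,
      Tendsto (fun n => dist (f^[n] z) (f^[n] (w z))) atTop (nhds 0) := by
    intro z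
    have hww' : w (w z) = w z := congrFun hww z
    by_cases hz : z = w z
    · nth_rewrite 1 [hz]
      simp
    have hlif : liminf (fun n => dist (f^[n] z) (f^[n] (w z))) atTop = 0 := by
      have hfr : ∀ ε > (0:ℝ), ∃ᶠ n in atTop, dist (f^[n] z) (f^[n] (w z)) < ε := by
        intro ε hε
        rw [frequently_atTop]
        intro N
        have hV : IsOpen {q : X → X | dist (q z) (q (w z)) < ε} :=
          isOpen_lt (Continuous.dist (continuous_apply z) (continuous_apply (w z)))
            continuous_const
        have hwV : w ∈ {q : X → X | dist (q z) (q (w z)) < ε} := by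
          simp only [Set.mem_setOf_eq, hww', dist_self]; exact hε
        obtain ⟨q, hq1, hq2⟩ := _root_.mem_closure_iff.mp (hwtail N) _ hV hwV
        obtain ⟨n, hn, rfl⟩ := hq2
        exact ⟨n, hn, hq1⟩
      have hb : IsBoundedUnder (· ≤ ·) atTop
          (fun n : ℕ => dist (f^[n] z) (f^[n] (w z))) :=
        isBoundedUnder_of ⟨C, fun n => hC _ _⟩
      apply le_antisymm
      · apply le_of_forall_pos_le_add
        intro ε hε
        rw [zero_add]
        exact liminf_le_of_frequently_le ((hfr ε hε).mono fun n h => le_of_lt h)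
          (isBoundedUnder_of ⟨0, fun n => dist_nonneg⟩)
      · exact le_liminf_of_le hb.isCoboundedUnder_ge
          (Eventually.of_forall fun n => dist_nonneg)
    have hnots := hX z (w z)
    rw [ScrambledPair] at hnots
    push_neg at hnots
    have hlsle := hnots hz
    rw [hlif] at hlsle
    have hlimsup : limsup (fun n => dist (f^[n] z) (f^[n] (w z))) atTop = 0 :=
      le_antisymm (hlsle rfl)
        (le_limsup_of_frequently_le (Frequently.of_forall fun n => dist_nonneg)
          (isBoundedUnder_of ⟨C, fun n => hC _ _⟩))
    exact tendsto_of_liminf_eq_limsup hlif hlimsup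
      (isBoundedUnder_of ⟨C, fun n => hC _ _⟩)
      (isBoundedUnder_of ⟨0, fun n => dist_nonneg⟩)
  -- uniform continuity transfer
  have hφu : UniformContinuous φ := CompactSpace.uniformContinuous_of_continuous hφc
  have htransfer : ∀ a b : ℕ → X,
      Tendsto (fun n => dist (a n) (b n)) atTop (nhds 0) →
      Tendsto (fun n => dist (φ (a n)) (φ (b n))) atTop (nhds 0) := by
    intro a b hab
    rw [Metric.tendsto_atTop] at hab ⊢
    intro ε hε
    obtain ⟨δ, hδ, hδε⟩ := Metric.uniformContinuous_iff.mp hφu ε hε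
    obtain ⟨N, hN⟩ := hab δ hδ
    refine ⟨N, fun n hn => ?_⟩
    have h1 := hN n hn
    rw [Real.dist_eq, sub_zero, abs_of_nonneg dist_nonneg] at h1 ⊢
    exact hδε h1
  -- conclude that the distance of the g-orbits tends to 0
  have hfin : Tendsto (fun n => dist (g^[n] (φ x)) (g^[n] (φ x'))) atTop (nhds 0) := by
    have h1 := htransfer _ _ (hprox x)
    have h2 := htransfer _ _ (hprox x')
    have hmid : ∀ n, φ (f^[n] (w x)) = φ (f^[n] (w x')) := by
      intro n
      rw [hit, hit, hwφ]
    have hbound : ∀ n, dist (g^[n] (φ x)) (g^[n] (φ x')) ≤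
        dist (φ (f^[n] x)) (φ (f^[n] (w x))) + dist (φ (f^[n] x')) (φ (f^[n] (w x'))) := by
      intro n
      rw [← hit, ← hit]
      calc dist (φ (f^[n] x)) (φ (f^[n] x'))
          ≤ dist (φ (f^[n] x)) (φ (f^[n] (w x))) + dist (φ (f^[n] (w x))) (φ (f^[n] x')) :=
            dist_triangle _ _ _
        _ = dist (φ (f^[n] x)) (φ (f^[n] (w x))) + dist (φ (f^[n] (w x'))) (φ (f^[n] x')) := by
            rw [hmid n]
        _ = _ := by rw [dist_comm (φ (f^[n] (w x'))) (φ (f^[n] x'))]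
    have hsum : Tendsto (fun n => dist (φ (f^[n] x)) (φ (f^[n] (w x))) +
        dist (φ (f^[n] x')) (φ (f^[n] (w x')))) atTop (nhds 0) := by
      have := h1.add h2
      simpa using this
    exact squeeze_zero (fun n => dist_nonneg) hbound hsum
  rw [hfin.limsup_eq] at hls
  exact lt_irrefl _ hls
end
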